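/- Assume additionally ρ(P) < 1. Let z ∈ ℝ^S with z ≥ 0 and define w^t := −B^t z − ∑_{k=0}^{t−1} B^k b for t ∈ ℕ. If liminf_{t→∞} (w^t)_s > −∞ for every s ∈ S, then ρ(B) < 1. -/

import Mathlib

/-!
Since `b ≥ c_l (I - P) 1 ≥ 0` and `B^t z ≥ 0`, the bound on the liminf of `w^t` bounds the partial
sums of the nonnegative series `v = ∑ₖ Bᵏ b`, which therefore converges. Every coordinate of `v` is
positive: `ρ(P) < 1` forces `Pᵏ → 0`, so the telescoping identity
`∑_{j<k} Pʲ (I - P) 1 = 1 - Pᵏ 1` yields some `j` with `(Pʲ (I - P) 1)_s > 0`, and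
`Bʲ b ≥ c_l^{j+1} Pʲ (I - P) 1`. Finally `Bᵗ v = ∑_{k ≥ t} Bᵏ b → 0`, which for a nonnegative
matrix and a positive vector forces `Bᵗ → 0`, i.e. `ρ(B) < 1` by Gelfand's formula.
-/

open Matrix Filter

/-- Spectral radius of a real square matrix: the maximum modulus of its complex eigenvalues. -/
noncomputable def specRad {S : Type*} [Fintype S] [DecidableEq S] (M : Matrix S S ℝ) : ℝ :=
  sSup ((fun z : ℂ => ‖z‖) '' spectrum ℂ (M.map Complex.ofReal))

open Topology
open scoped ENNReal

section SpectralRadius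
variable {A : Type*} [NormedRing A] [NormedAlgebra ℂ A] [CompleteSpace A]

theorem tendsto_pow_atTop_nhds_zero_of_spectralRadius_lt_one {a : A}
    (ha : spectralRadius ℂ a < 1) : Tendsto (a ^ ·) atTop (𝓝 0) := by
  obtain ⟨r, har, hr1⟩ := ENNReal.lt_iff_exists_nnreal_btwn.mp ha
  have hnorm : ∀ᶠ n : ℕ in atTop, ‖a ^ n‖₊ ≤ r ^ n := by
    filter_upwards
      [(spectrum.pow_nnnorm_pow_one_div_tendsto_nhds_spectralRadius a).eventually_lt_const har,
      eventually_ne_atTop 0] with n hn hn0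
    have := ENNReal.rpow_le_rpow hn.le (Nat.cast_nonneg n)
    rw [← ENNReal.rpow_mul, one_div, inv_mul_cancel₀ (Nat.cast_ne_zero.2 hn0), ENNReal.rpow_one,
      ENNReal.rpow_natCast] at this
    exact_mod_cast this
  refine squeeze_zero_norm' ?_
    (tendsto_pow_atTop_nhds_zero_of_lt_one r.coe_nonneg (by exact_mod_cast hr1))
  filter_upwards [hnorm] with n hn
  exact_mod_cast hn

theorem spectralRadius_lt_one_of_tendsto_pow [NormOneClass A] {a : A}
    (ha : Tendsto (a ^ ·) atTop (𝓝 0)) : spectralRadius ℂ a < 1 := by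
  obtain ⟨n, hn, hn0⟩ := ((ha.norm.eventually_lt_const (by norm_num : ‖(0 : A)‖ < 1)).and
    (eventually_ne_atTop 0)).exists
  refine (pow_lt_one_iff hn0).1 ((spectrum.spectralRadius_pow_le a n hn0).trans_lt ?_)
  refine (spectrum.spectralRadius_le_nnnorm _).trans_lt ?_
  exact_mod_cast hn

theorem spectralRadius_lt_one_iff_tendsto_pow [NormOneClass A] (a : A) :
    spectralRadius ℂ a < 1 ↔ Tendsto (a ^ ·) atTop (𝓝 0) :=
  ⟨tendsto_pow_atTop_nhds_zero_of_spectralRadius_lt_one, spectralRadius_lt_one_of_tendsto_pow⟩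

end SpectralRadius

section SpecRad

variable {S : Type*} [Fintype S] [DecidableEq S] [Nonempty S]

attribute [local instance] Matrix.linftyOpNormedAddCommGroup Matrix.linftyOpNormedRing
  Matrix.linftyOpNormedAlgebra

theorem ofReal_specRad_eq_spectralRadius (M : Matrix S S ℝ) :
    ENNReal.ofReal (specRad M) = spectralRadius ℂ (M.map Complex.ofReal) := by
  obtain ⟨z, hz, hzr⟩ := spectrum.exists_nnnorm_eq_spectralRadius (M.map Complex.ofReal)
  have : IsGreatest ((fun z : ℂ => ‖z‖) '' spectrum ℂ (M.map Complex.ofReal)) ‖z‖ := by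
    refine ⟨⟨z, hz, rfl⟩, ?_⟩
    rintro _ ⟨w, hw, rfl⟩
    have : (‖w‖₊ : ℝ≥0∞) ≤ ‖z‖₊ := hzr ▸ le_iSup₂ (α := ℝ≥0∞) w hw
    exact_mod_cast this
  rw [specRad, this.csSup_eq, ← hzr, ofReal_norm, enorm_eq_nnnorm]

theorem specRad_lt_one_iff_tendsto_pow (M : Matrix S S ℝ) :
    specRad M < 1 ↔ Tendsto (M ^ ·) atTop (𝓝 0) := by
  rw [← ENNReal.ofReal_lt_one, ofReal_specRad_eq_spectralRadius,
    spectralRadius_lt_one_iff_tendsto_pow, Complex.isometry_ofReal.isEmbedding.matrix_map.tendsto_nhds_iff]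
  have hpow (n : ℕ) : (M ^ n).map Complex.ofReal = M.map Complex.ofReal ^ n :=
    Matrix.map_pow M Complex.ofRealHom n
  simp only [Function.comp_def, Matrix.map_zero _ Complex.ofReal_zero, hpow]
  -- the `‖·‖∞` operator norm is set up to induce the product topology definitionally
  exact Iff.rfl

end SpecRad

namespace Matrix

section OrderedSemiring

variable {m n R : Type*} [Fintype n] [Semiring R] [PartialOrder R] [IsOrderedRing R]

theorem mulVec_nonneg_of_nonneg {A : Matrix m n R} (hA : ∀ i j, 0 ≤ A i j) {x : n → R}
    (hx : 0 ≤ x) : 0 ≤ A *ᵥ x :=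
  fun i => Finset.sum_nonneg fun j _ => mul_nonneg (hA i j) (hx j)

theorem mulVec_le_mulVec_of_le {A C : Matrix m n R} (hA : ∀ i j, 0 ≤ A i j)
    (hAC : ∀ i j, A i j ≤ C i j) {x y : n → R} (hx : 0 ≤ x) (hxy : x ≤ y) : A *ᵥ x ≤ C *ᵥ y :=
  fun i => Finset.sum_le_sum fun j _ =>
    mul_le_mul (hAC i j) (hxy j) (hx j) ((hA i j).trans (hAC i j))

variable [DecidableEq n]

theorem pow_apply_le_pow_apply {A C : Matrix n n R} (hA : ∀ i j, 0 ≤ A i j)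
    (hAC : ∀ i j, A i j ≤ C i j) (k : ℕ) (i j : n) : (A ^ k) i j ≤ (C ^ k) i j := by
  induction k generalizing j with
  | zero => rfl
  | succ k ih =>
    rw [pow_succ, pow_succ, mul_apply, mul_apply]
    exact Finset.sum_le_sum fun l _ =>
      mul_le_mul (ih l) (hAC l j) (hA l j) ((pow_apply_nonneg hA k i l).trans (ih l))

end OrderedSemiring

theorem mulVec_tsum {m n ι R : Type*} [Fintype n] [CommSemiring R] [TopologicalSpace R]
    [IsTopologicalSemiring R] [T2Space R] (A : Matrix m n R) {f : ι → n → R} (hf : Summable f) :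
    A *ᵥ ∑' k, f k = ∑' k, A *ᵥ f k :=
  hf.map_tsum (mulVecLin A) (continuous_const.matrix_mulVec continuous_id)

theorem tendsto_pow_mulVec_tsum_pow_mulVec {n R : Type*} [Fintype n] [DecidableEq n] [CommRing R]
    [TopologicalSpace R] [IsTopologicalRing R] [T2Space R] {B : Matrix n n R} {b : n → R}
    (h : Summable fun k => B ^ k *ᵥ b) :
    Tendsto (fun t => B ^ t *ᵥ ∑' k, B ^ k *ᵥ b) atTop (𝓝 0) := by
  have htail (t : ℕ) : B ^ t *ᵥ ∑' k, B ^ k *ᵥ b = ∑' k, B ^ (k + t) *ᵥ b := by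
    simp_rw [mulVec_tsum _ h, mulVec_mulVec, ← pow_add, add_comm]
  simpa only [htail] using tendsto_sum_nat_add fun k => B ^ k *ᵥ b

theorem tendsto_zero_of_tendsto_mulVec_zero {m n ι : Type*} [Fintype n] {l : Filter ι}
    {A : ι → Matrix m n ℝ} (hA : ∀ t i j, 0 ≤ A t i j) {v : n → ℝ} (hv : ∀ j, 0 < v j)
    (h : Tendsto (fun t => A t *ᵥ v) l (𝓝 0)) : Tendsto A l (𝓝 0) := by
  refine tendsto_pi_nhds.2 fun i => tendsto_pi_nhds.2 fun j => ?_
  have hAv : Tendsto (fun t => A t i j * v j) l (𝓝 0) :=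
    squeeze_zero (fun t => mul_nonneg (hA t i j) (hv j).le)
      (fun t => Finset.single_le_sum (f := fun k => A t i k * v k)
        (fun k _ => mul_nonneg (hA t i k) (hv k).le) (Finset.mem_univ j))
      (tendsto_pi_nhds.1 h i)
  simpa [mul_inv_cancel_right₀ (hv j).ne'] using hAv.mul_const (v j)⁻¹

theorem exists_pow_mulVec_one_sub_mulVec_one_pos {n : Type*} [Fintype n] [DecidableEq n]
    {P : Matrix n n ℝ} (hP : Tendsto (P ^ ·) atTop (𝓝 0)) (s : n) :
    ∃ k, 0 < (P ^ k *ᵥ ((1 - P) *ᵥ fun _ => 1)) s := by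
  have hPk : Tendsto (fun k => (P ^ k *ᵥ fun _ => (1 : ℝ)) s) atTop (𝓝 0) := by
    have hcont : Continuous fun M : Matrix n n ℝ => (M *ᵥ fun _ => (1 : ℝ)) s :=
      (continuous_apply s).comp (continuous_id.matrix_mulVec continuous_const)
    simpa [Function.comp_def] using (hcont.tendsto 0).comp hP
  obtain ⟨k, hk⟩ := (hPk.eventually_lt_const one_pos).exists
  have htelescope : ∑ j ∈ Finset.range k, P ^ j *ᵥ ((1 - P) *ᵥ fun _ => (1 : ℝ))
      = (1 - P ^ k) *ᵥ fun _ => 1 := by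
    simp_rw [mulVec_mulVec, ← sum_mulVec, ← Finset.sum_mul, geom_sum_mul_neg]
  have hsum_pos : 0 < ∑ j ∈ Finset.range k, (P ^ j *ᵥ ((1 - P) *ᵥ fun _ => (1 : ℝ))) s := by
    rw [← Finset.sum_apply, htelescope, sub_mulVec, one_mulVec, Pi.sub_apply]
    linarith
  by_contra! hnonpos
  linarith [Finset.sum_nonpos fun j (_ : j ∈ Finset.range k) => hnonpos j]

end Matrix

theorem summable_of_bot_lt_liminf {f : ℕ → ℝ} (hf : ∀ n, 0 ≤ f n) {u : ℕ → ℝ}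
    (hu : ∀ t, u t ≤ -∑ k ∈ Finset.range t, f k)
    (h : ⊥ < liminf (fun t => (u t : EReal)) atTop) : Summable f := by
  by_contra hns
  have hu_bot : Tendsto u atTop atBot :=
    tendsto_atBot_mono hu (tendsto_neg_atTop_atBot.comp
      ((not_summable_iff_tendsto_nat_atTop_of_nonneg hf).1 hns))
  rw [(EReal.tendsto_coe_nhds_bot_iff.2 hu_bot).liminf_eq] at h
  exact h.ne rfl

theorem stmt3_general {S : Type*} [Fintype S] [DecidableEq S] [Nonempty S]
    (P B : Matrix S S ℝ) (b : S → ℝ) (cl : ℝ)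
    (hPnn : ∀ s s', 0 ≤ P s s')
    (hP1 : ∀ s, (P *ᵥ fun _ => (1 : ℝ)) s ≤ 1)
    (hcl : 0 < cl)
    (hBnn : ∀ s s', 0 ≤ B s s')
    (hBl : ∀ s s', cl * P s s' ≤ B s s')
    (hbl : ∀ s, cl * ((((1 : Matrix S S ℝ) - P) *ᵥ fun _ => (1 : ℝ)) s) ≤ b s)
    (hρP : specRad P < 1)
    (z : S → ℝ) (hz : ∀ s, 0 ≤ z s)
    (hbdd : ∀ s, (⊥ : EReal) <
      Filter.liminf
        (fun t => (((-((B ^ t) *ᵥ z) - ∑ k ∈ Finset.range t, (B ^ k) *ᵥ b) s : ℝ) : EReal))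
        Filter.atTop) :
    specRad B < 1 := by
  set q : S → ℝ := ((1 : Matrix S S ℝ) - P) *ᵥ fun _ => 1
  have hq : 0 ≤ q := fun s => by
    simpa [q, sub_mulVec] using hP1 s
  have hb : 0 ≤ b := fun s => (mul_nonneg hcl.le (hq s)).trans (hbl s)
  have hBkb (k : ℕ) : 0 ≤ B ^ k *ᵥ b := mulVec_nonneg_of_nonneg (pow_apply_nonneg hBnn k) hb
  have hsum : Summable fun k => B ^ k *ᵥ b := by
    refine Pi.summable.2 fun s =>
      summable_of_bot_lt_liminf (fun k => hBkb k s) (fun t => ?_) (hbdd s)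
    have hBtz : 0 ≤ (B ^ t *ᵥ z) s := mulVec_nonneg_of_nonneg (pow_apply_nonneg hBnn t) hz s
    simp only [Pi.sub_apply, Pi.neg_apply, Finset.sum_apply]
    linarith
  have hclP : ∀ i j, 0 ≤ (cl • P) i j := fun i j => mul_nonneg hcl.le (hPnn i j)
  have hv : ∀ s, 0 < (∑' k, B ^ k *ᵥ b) s := fun s => by
    obtain ⟨k, hk⟩ := exists_pow_mulVec_one_sub_mulVec_one_pos
      ((specRad_lt_one_iff_tendsto_pow P).1 hρP) s
    calc 0 < cl ^ (k + 1) * (P ^ k *ᵥ q) s := by positivity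
      _ = ((cl • P) ^ k *ᵥ cl • q) s := by
        simp only [smul_pow, smul_mulVec, mulVec_smul, Pi.smul_apply, smul_eq_mul]
        ring
      _ ≤ (B ^ k *ᵥ b) s :=
        mulVec_le_mulVec_of_le (pow_apply_nonneg hclP k) (pow_apply_le_pow_apply hclP hBl k)
          (smul_nonneg hcl.le hq) hbl s
      _ ≤ (∑' k, B ^ k *ᵥ b) s := hsum.le_tsum k (fun j _ => hBkb j) s
  exact (specRad_lt_one_iff_tendsto_pow B).2 <| tendsto_zero_of_tendsto_mulVec_zero
    (fun t => pow_apply_nonneg hBnn t) hv (tendsto_pow_mulVec_tsum_pow_mulVec hsum)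

theorem stmt3 {S : Type*} [Fintype S] [DecidableEq S] [Nonempty S]
    (P B : Matrix S S ℝ) (b : S → ℝ) (cl cu : ℝ)
    (hPnn : ∀ s s', 0 ≤ P s s')
    (hP1 : ∀ s, (P *ᵥ fun _ => (1 : ℝ)) s ≤ 1)
    (hcl : 0 < cl) (hclcu : cl ≤ cu)
    (hBnn : ∀ s s', 0 ≤ B s s')
    (hBl : ∀ s s', cl * P s s' ≤ B s s')
    (hBu : ∀ s s', B s s' ≤ cu * P s s')
    (hbl : ∀ s, cl * ((((1 : Matrix S S ℝ) - P) *ᵥ fun _ => (1 : ℝ)) s) ≤ b s)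
    (hbu : ∀ s, b s ≤ cu * ((((1 : Matrix S S ℝ) - P) *ᵥ fun _ => (1 : ℝ)) s))
    (hρP : specRad P < 1)
    (z : S → ℝ) (hz : ∀ s, 0 ≤ z s)
    (hbdd : ∀ s, (⊥ : EReal) <
      Filter.liminf
        (fun t => (((-((B ^ t) *ᵥ z) - ∑ k ∈ Finset.range t, (B ^ k) *ᵥ b) s : ℝ) : EReal))
        Filter.atTop) :
    specRad B < 1 :=
  stmt3_general P B b cl hPnn hP1 hcl hBnn hBl hbl hρP z hz hbdd
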